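/- arXiv:1903.11209 — 5 statements merged into one kernel-verified Lean document; each statement's English description precedes it below -/
import Mathlib

section
/- Each unreduced Burau matrix β(σ_i) satisfies β(σ_i)* J β(σ_i) = J, where * denotes conjugate-transpose with respect to the involution of Λ sending t to t⁻¹, and J is the Hermitian matrix with diagonal entries 1, entries -t below the diagonal, and entries -t⁻¹ above the diagonal. -/
/-!
`β(σᵢ)` is a rank-one perturbation of the identity, `β(σᵢ) = 1 + u wᵀ` with `u = eᵢ - eᵢ₊₁` and
`w = eᵢ₊₁ - t eᵢ`. For a Hermitian `J`, such a matrix is `J`-unitary as soon as `J u = -c w̄` and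
`u* J u = c + c̄` for some scalar `c`: expanding `(1 + w̄ u*) J (1 + u wᵀ)`, the three
correction terms are `-c`, `-c̄` and `c + c̄` times `w̄ wᵀ`. Squier's form satisfies both
relations with `c = 1 + t`.
-/

open LaurentPolynomial Matrix

/-- `t ∈ ℤ[t,t⁻¹]`. -/
noncomputable def tt : LaurentPolynomial ℤ := T 1

/-- The unreduced Burau matrix `β(σᵢ)` (0-indexed: block at rows/columns `i, i+1`). -/
noncomputable def burau (n i : ℕ) : Matrix (Fin n) (Fin n) (LaurentPolynomial ℤ) :=
  Matrix.of fun a b =>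
    if (a : ℕ) = i ∧ (b : ℕ) = i then 1 - tt
    else if (a : ℕ) = i ∧ (b : ℕ) = i + 1 then 1
    else if (a : ℕ) = i + 1 ∧ (b : ℕ) = i then tt
    else if (a : ℕ) = i + 1 ∧ (b : ℕ) = i + 1 then 0
    else if a = b then 1 else 0

/-- Conjugate-transpose with respect to the involution `t ↦ t⁻¹` of `ℤ[t,t⁻¹]`. -/
noncomputable def starM {n : ℕ} (A : Matrix (Fin n) (Fin n) (LaurentPolynomial ℤ)) :
    Matrix (Fin n) (Fin n) (LaurentPolynomial ℤ) :=
  Matrix.of fun a b => LaurentPolynomial.invert (A b a)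

/-- Squier's Hermitian form: `1` on the diagonal, `-t` below, `-t⁻¹` above. -/
noncomputable def JMat (n : ℕ) : Matrix (Fin n) (Fin n) (LaurentPolynomial ℤ) :=
  Matrix.of fun a b =>
    if a = b then 1 else if b < a then -tt else -(T (-1))

-- The involution fixes coefficients, so it is the right one only for coefficient rings with a
-- trivial involution, such as `ℤ`.
noncomputable abbrev LaurentPolynomial.invertStarRing (R : Type*) [CommSemiring R] :
    StarRing R[T;T⁻¹] where
  star := invert
  star_involutive := involutive_invert
  star_mul a b := by rw [map_mul, mul_comm]
  star_add := map_add invert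

attribute [local instance] LaurentPolynomial.invertStarRing

namespace Matrix

variable {R ι : Type*} [CommRing R] [StarRing R] [Fintype ι] [DecidableEq ι]

theorem conjTranspose_mul_mul_eq_of_one_add_vecMulVec {J : Matrix ι ι R} (hJ : J.IsHermitian)
    {u w : ι → R} {c : R} (hu : J *ᵥ u = -c • star w) (hc : star u ⬝ᵥ J *ᵥ u = c + star c) :
    (1 + vecMulVec u w)ᴴ * J * (1 + vecMulVec u w) = J := by
  have huJ : star u ᵥ* J = -star c • w := by
    rw [← hJ.eq, vecMul_conjTranspose, star_star, hu, star_smul, star_neg, star_star]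
  have hc' : -c * (star u ⬝ᵥ star w) = c + star c := by
    rw [← hc, hu, dotProduct_smul, smul_eq_mul]
  rw [Matrix.mul_assoc, mul_add, mul_one, mul_vecMulVec, hu, conjTranspose_add, conjTranspose_one,
    conjTranspose_vecMulVec, add_mul, one_mul, mul_add, vecMulVec_mul, huJ,
    vecMulVec_mul_vecMulVec, dotProduct_smul, smul_eq_mul, hc', smul_vecMulVec, vecMulVec_smul,
    vecMulVec_smul]
  module

end Matrix

lemma LaurentPolynomial.star_T {R : Type*} [CommSemiring R] (m : ℤ) :
    star (T m : R[T;T⁻¹]) = T (-m) :=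
  invert_T m

lemma starM_eq_conjTranspose {n : ℕ} (A : Matrix (Fin n) (Fin n) (LaurentPolynomial ℤ)) :
    starM A = Aᴴ :=
  rfl

lemma star_tt : star tt = T (-1) :=
  star_T 1

lemma tt_mul_T_neg_one : tt * T (-1) = 1 := by
  rw [tt, ← T_add, add_neg_cancel, T_zero]

lemma isHermitian_JMat (n : ℕ) : (JMat n).IsHermitian := by
  refine Matrix.ext fun a b => ?_
  rcases lt_trichotomy a b with hab | rfl | hab
  · simp [JMat, tt, star_T, hab, hab.ne, hab.ne', not_lt.mpr hab.le]
  · simp [JMat]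
  · simp [JMat, tt, star_T, hab, hab.ne, hab.ne', not_lt.mpr hab.le]

section BurauVectors

variable {n i : ℕ} {j k : Fin n}

lemma burau_eq_one_add_vecMulVec (hj : (j : ℕ) = i) (hk : (k : ℕ) = i + 1) :
    burau n i =
      1 + vecMulVec (Pi.single j 1 - Pi.single k 1) (Pi.single k 1 - tt • Pi.single j 1) := by
  refine Matrix.ext fun a b => ?_
  simp only [burau, Fin.ext_iff, of_apply, Matrix.add_apply, one_apply, vecMulVec_apply,
    Pi.sub_apply, Pi.single_apply, hj, hk, Pi.smul_apply, smul_eq_mul, mul_ite, mul_one, mul_zero]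
  split_ifs <;> first | omega | ring

lemma JMat_mulVec_single_sub_single (hjk : (k : ℕ) = j + 1) :
    JMat n *ᵥ (Pi.single j 1 - Pi.single k 1) =
      -(1 + tt) • star (Pi.single k 1 - tt • Pi.single j 1) := by
  have hjk' : j < k := Fin.lt_def.mpr (by omega)
  funext a
  simp only [mulVec_sub, mulVec_single_one, Pi.sub_apply, col_apply, JMat, of_apply, Pi.star_apply,
    Pi.smul_apply, Pi.single_apply, star_sub, star_smul, smul_eq_mul, star_tt]
  rcases lt_trichotomy a j with ha | rfl | ha
  · have hak : a < k := ha.trans hjk'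
    simp [ha.ne, hak.ne, ha.not_gt, hak.not_gt]
  · simp only [↓reduceIte, hjk'.ne, hjk'.not_gt, sub_neg_eq_add, neg_add_rev, star_zero,
      star_one, mul_one, zero_sub, mul_neg]
    linear_combination -tt_mul_T_neg_one
  · rcases eq_or_ne a k with rfl | hak
    · simp only [hjk'.ne', ↓reduceIte, hjk', neg_add_rev, star_one, star_zero, mul_zero,
        sub_zero, mul_one]
      ring
    · have hka : k < a :=
        lt_of_le_of_ne (by simp only [Fin.le_def, Fin.lt_def] at ha ⊢; omega) hak.symm
      simp [ha, hka, ha.ne', hak]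

lemma star_dotProduct_JMat_mulVec_single_sub_single (hjk : (k : ℕ) = j + 1) :
    star (Pi.single j 1 - Pi.single k 1) ⬝ᵥ JMat n *ᵥ (Pi.single j 1 - Pi.single k 1) =
      (1 + tt) + star (1 + tt) := by
  have hjk' : j ≠ k := Fin.ne_of_val_ne (by omega)
  rw [JMat_mulVec_single_sub_single hjk]
  simp only [star_sub, Pi.star_single, star_one, neg_add_rev, star_smul, star_tt, dotProduct_smul,
    dotProduct_sub, dotProduct_single, Pi.sub_apply, ne_eq, hjk'.symm, not_false_eq_true,
    Pi.single_eq_of_ne, Pi.single_eq_same, zero_sub, mul_one, hjk', sub_zero, smul_eq_mul, star_add]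
  linear_combination tt_mul_T_neg_one

end BurauVectors

/-- Each Burau matrix is unitary for the Hermitian form `J`: `β(σᵢ)* J β(σᵢ) = J`. -/
theorem burau_unitary (n i : ℕ) (h : i + 1 < n) :
    starM (burau n i) * JMat n * burau n i = JMat n := by
  have hjk : ((⟨i + 1, h⟩ : Fin n) : ℕ) = (⟨i, by omega⟩ : Fin n) + 1 := rfl
  rw [starM_eq_conjTranspose, burau_eq_one_add_vecMulVec rfl hjk]
  exact conjTranspose_mul_mul_eq_of_one_add_vecMulVec (isHermitian_JMat n)
    (JMat_mulVec_single_sub_single hjk) (star_dotProduct_JMat_mulVec_single_sub_single hjk)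
end

section
/- Let A ∈ GL_n(Λ) satisfy A* J A = J, (1,...,1)·A = (1,...,1), and A ≡ I mod s^k for k ≥ 1, where s = t-1. Write A = I + s^k A' and let M = A' mod s ∈ M_n(ℤ). Then Mᵀ = (-1)^{k+1} M; i.e., M is symmetric if k is odd and skew-symmetric if k is even. -/
open LaurentPolynomial Matrix

/-- `s = t - 1`. -/
noncomputable def ss : LaurentPolynomial ℤ := tt - 1

section LaurentEvaluation

variable {R S : Type*} [CommSemiring R] [Semiring S]

lemma map_T_eq_one (r : R[T;T⁻¹] →+* S) (hr : r (T 1) = 1) (m : ℤ) : r (T m) = 1 := by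
  have hnat (n : ℕ) : r (T n) = 1 := by
    rw [← mul_one (n : ℤ), ← T_pow, map_pow, hr, one_pow]
  obtain ⟨n, rfl | rfl⟩ := Int.eq_nat_or_neg m
  · exact hnat n
  · have h := congrArg r (T_add (R := R) (-n) n)
    rwa [neg_add_cancel, T_zero, map_one, map_mul, hnat, mul_one, eq_comm] at h

lemma map_invert (r : R[T;T⁻¹] →+* S) (hr : r (T 1) = 1) (p : R[T;T⁻¹]) :
    r (invert p) = r p := by
  induction p using LaurentPolynomial.induction_on' with
  | add p q hp hq => rw [map_add, map_add, map_add, hp, hq]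
  | C_mul_T m a =>
    rw [map_mul, invert_C, invert_T, map_mul, map_mul, map_T_eq_one r hr, map_T_eq_one r hr]

end LaurentEvaluation

lemma ss_ne_zero : ss ≠ 0 := by
  have h : ss = Polynomial.toLaurent (Polynomial.X - Polynomial.C 1) := by simp [ss, tt]
  rw [h, Polynomial.toLaurent_ne_zero]
  exact Polynomial.X_sub_C_ne_zero 1

lemma invert_ss : invert ss = -T (-1) * ss := by
  have h : (T (-1) : LaurentPolynomial ℤ) * T 1 = 1 := by rw [← T_add]; simp [T_zero]
  simp only [ss, tt, map_sub, invert_T, map_one]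
  linear_combination h

lemma map_ss {S : Type*} [Ring S] (r : LaurentPolynomial ℤ →+* S) (hr : r tt = 1) :
    r ss = 0 := by
  rw [ss, map_sub, hr, map_one, sub_self]

section MatrixLemmas

variable {m R : Type*} [Fintype m] [CommRing R]

lemma ones_mul_eq_zero {M : Matrix m m R} (h : (fun _ => 1) ᵥ* M = 0) :
    (of fun _ _ => 1 : Matrix m m R) * M = 0 := by
  ext i j
  simpa [mul_apply, vecMul, dotProduct] using congrFun h j

lemma transpose_mul_ones_eq_zero {M : Matrix m m R} (h : (fun _ => 1) ᵥ* M = 0) :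
    Mᵀ * (of fun _ _ => 1 : Matrix m m R) = 0 := by
  have h_symm : (of fun _ _ => 1 : Matrix m m R)ᵀ = of fun _ _ => 1 := rfl
  rw [← h_symm, ← transpose_mul, ones_mul_eq_zero h, transpose_zero]

lemma ones_vecMul_map_eq_zero {S : Type*} [CommRing S] (f : R →+* S) {M : Matrix m m R}
    (h : (fun _ => 1) ᵥ* M = 0) : (fun _ => 1) ᵥ* M.map f = 0 := by
  funext j
  have hj := f.map_vecMul M (fun _ => 1) j
  rw [congrFun h j] at hj
  simpa [Function.comp_def] using hj.symm

variable [DecidableEq m]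

lemma mul_add_smul_eq_zero_of_isometry [IsDomain R] {J A B : Matrix m m R} {c e : R}
    (hc : c ≠ 0) (h : (1 + (e * c) • B) * J * (1 + c • A) = J) :
    J * A + e • (B * J) + (e * c) • (B * J * A) = 0 := by
  have expand : (1 + (e * c) • B) * J * (1 + c • A)
      = J + c • (J * A + e • (B * J) + (e * c) • (B * J * A)) := by
    simp only [add_mul, mul_add, one_mul, mul_one, Matrix.smul_mul, Matrix.mul_smul, smul_add,
      smul_smul, Matrix.mul_assoc]
    ring_nf
    abel
  rw [expand, add_eq_left, smul_eq_zero] at h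
  exact h.resolve_left hc

lemma ones_vecMul_eq_zero_of_one_add_smul [IsDomain R] {A : Matrix m m R} {c : R} (hc : c ≠ 0)
    (h : (fun _ => 1) ᵥ* (1 + c • A) = fun _ => 1) : (fun _ => 1) ᵥ* A = 0 := by
  rw [vecMul_add, vecMul_one, vecMul_smul, add_eq_left, smul_eq_zero] at h
  exact h.resolve_left hc

end MatrixLemmas

lemma transpose_eq_neg_one_pow_smul {m : Type*} {M : Matrix m m ℤ} {k : ℕ}
    (h : (2 : ℤ) • M + (-1 : ℤ) ^ k • (2 : ℤ) • Mᵀ = 0) : Mᵀ = (-1 : ℤ) ^ (k + 1) • M := by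
  ext i j
  have hij := congrFun₂ h j i
  simp only [Matrix.add_apply, Matrix.smul_apply, transpose_apply, smul_eq_mul,
    Matrix.zero_apply] at hij ⊢
  rcases neg_one_pow_eq_or ℤ k with hk | hk <;> rw [pow_succ, hk] <;> rw [hk] at hij <;> linarith

lemma starM_one_add_smul {n : ℕ} (c : LaurentPolynomial ℤ)
    (A : Matrix (Fin n) (Fin n) (LaurentPolynomial ℤ)) :
    starM (1 + c • A) = 1 + invert c • starM A := by
  ext a b
  by_cases hab : a = b
  · subst hab; simp [starM]
  · simp [starM, one_apply_ne hab, one_apply_ne (Ne.symm hab)]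

lemma map_starM {n : ℕ} {S : Type*} [Semiring S] (r : LaurentPolynomial ℤ →+* S) (hr : r tt = 1)
    (A : Matrix (Fin n) (Fin n) (LaurentPolynomial ℤ)) : (starM A).map r = (A.map r)ᵀ := by
  ext a b
  exact map_invert r hr (A b a)

lemma map_JMat (n : ℕ) {S : Type*} [Ring S] (r : LaurentPolynomial ℤ →+* S) (hr : r tt = 1) :
    (JMat n).map r = (2 : ℤ) • 1 - of fun _ _ => 1 := by
  ext a b
  have hT : r (T (-1)) = 1 := map_T_eq_one r hr (-1)
  simp only [JMat, map_apply, of_apply, Matrix.sub_apply, Matrix.smul_apply, one_apply]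
  split_ifs <;> norm_num [hr, hT]

/-- If `A* J A = J`, `(1,…,1)·A = (1,…,1)`, and `A = I + s^k A'` with `k ≥ 1`,
then `M = A' mod s` satisfies `Mᵀ = (-1)^{k+1} M`. -/
theorem coeff_symmetry (n k : ℕ) (hk : 1 ≤ k)
    (A : GL (Fin n) (LaurentPolynomial ℤ))
    (A' : Matrix (Fin n) (Fin n) (LaurentPolynomial ℤ))
    (hJ : starM (A : Matrix (Fin n) (Fin n) (LaurentPolynomial ℤ)) * JMat n *
        (A : Matrix (Fin n) (Fin n) (LaurentPolynomial ℤ)) = JMat n)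
    (h1 : Matrix.vecMul (fun _ => 1)
        (A : Matrix (Fin n) (Fin n) (LaurentPolynomial ℤ)) = fun _ => 1)
    (hA : (A : Matrix (Fin n) (Fin n) (LaurentPolynomial ℤ)) = 1 + ss ^ k • A')
    (r : LaurentPolynomial ℤ →+* ℤ) (hr : r tt = 1) :
    (A'.map r)ᵀ = ((-1 : ℤ) ^ (k + 1)) • A'.map r := by
  set M := A'.map r
  have hc : ss ^ k ≠ 0 := pow_ne_zero k ss_ne_zero
  have hcol : (fun _ => 1) ᵥ* M = 0 :=
    ones_vecMul_map_eq_zero r (ones_vecMul_eq_zero_of_one_add_smul hc (hA ▸ h1))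
  have hstar : starM (A : Matrix (Fin n) (Fin n) (LaurentPolynomial ℤ))
      = 1 + ((-T (-1)) ^ k * ss ^ k) • starM A' := by
    rw [hA, starM_one_add_smul, map_pow, invert_ss, mul_pow]
  have hlin := mul_add_smul_eq_zero_of_isometry hc (by rwa [hstar, hA] at hJ)
  have he : r ((-T (-1)) ^ k) = (-1) ^ k := by rw [map_pow, map_neg, map_T_eq_one r hr]
  have hmap := congrArg r.mapMatrix hlin
  simp only [map_add, map_zero, RingHom.mapMatrix_apply, Matrix.map_smul' _ _ _ (map_mul r),
    Matrix.map_mul, map_mul, map_pow, map_starM r hr, map_JMat n r hr, he, map_ss r hr,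
    zero_pow (by omega : k ≠ 0), mul_zero, zero_smul, add_zero] at hmap
  rw [mul_sub, sub_mul, ones_mul_eq_zero hcol, transpose_mul_ones_eq_zero hcol, Matrix.smul_mul,
    Matrix.mul_smul, one_mul, mul_one, sub_zero, sub_zero] at hmap
  exact transpose_eq_neg_one_pow_smul hmap
end

section
/- Let A ∈ GL_n(ℤ[t,t⁻¹]) satisfy A ≡ I mod s^k for some k ≥ 2, where s = t-1. Then det(A) = 1, and writing A = I + s^k A', the trace tr(A') is divisible by s^k; in particular the integer trace of (A' mod s) is 0. -/
/-!
The units of `ℤ[t,t⁻¹]` are `±tᵃ`, and evaluating at `t = 1 + ε` in the dual numbers sends `±tᵃ`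
to `±(1 + a ε)` and kills `s²`, so the only unit congruent to `1` mod `s²` is `1`. Since
`det (1 + sᵏ A') = 1 + sᵏ tr A' + s²ᵏ e` is a unit congruent to `1` mod `sᵏ`, it equals `1`, and
cancelling `sᵏ` in the domain `ℤ[t,t⁻¹]` gives `tr A' = -sᵏ e`.
-/

open LaurentPolynomial Matrix

open DualNumber

namespace LaurentPolynomial

variable {R : Type*} [CommRing R]

noncomputable def oneAddSmulEps : Multiplicative ℤ →* R[ε] where
  toFun a := 1 + (a.toAdd : R) • ε
  map_one' := by simp
  map_mul' a b := by
    ext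
    · simp
    · simp [TrivSqZeroExt.snd_mul, add_comm]

/-- Evaluation at `t = 1 + ε`, i.e. `f ↦ f(1) + f'(1) ε`. -/
noncomputable def evalOneAddEps : R[T;T⁻¹] →ₐ[R] R[ε] :=
  AddMonoidAlgebra.lift R R[ε] ℤ oneAddSmulEps

theorem evalOneAddEps_C_mul_T (c : R) (a : ℤ) :
    evalOneAddEps (C c * T a) = c • (1 + (a : R) • ε) := by
  rw [← single_eq_C_mul_T]
  exact AddMonoidAlgebra.lift_single _ _ _

theorem evalOneAddEps_T (a : ℤ) : evalOneAddEps (T a : R[T;T⁻¹]) = 1 + (a : R) • ε := by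
  simpa using evalOneAddEps_C_mul_T (1 : R) a

theorem evalOneAddEps_T_one_sub_one : evalOneAddEps (T 1 - 1 : R[T;T⁻¹]) = ε := by
  simp [evalOneAddEps_T]

theorem T_one_sub_one_ne_zero [Nontrivial R] : (T 1 - 1 : R[T;T⁻¹]) ≠ 0 := by
  intro h
  have := evalOneAddEps_T_one_sub_one.symm.trans (congrArg evalOneAddEps h)
  simpa using congrArg TrivSqZeroExt.snd this

theorem evalOneAddEps_eq_one_of_sq_dvd_sub_one {f : R[T;T⁻¹]} (hf : (T 1 - 1) ^ 2 ∣ f - 1) :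
    evalOneAddEps f = 1 := by
  obtain ⟨g, hg⟩ := hf
  have := congrArg evalOneAddEps hg
  rwa [map_sub, map_one, map_mul, map_pow, evalOneAddEps_T_one_sub_one, eps_pow_two, zero_mul,
    sub_eq_zero] at this

theorem exists_C_mul_T_of_isUnit [IsDomain R] {f : R[T;T⁻¹]} (hf : IsUnit f) :
    ∃ c : R, IsUnit c ∧ ∃ a : ℤ, f = C c * T a := by
  obtain ⟨g, hfg⟩ := hf.exists_right_inv
  obtain ⟨n, p, hp⟩ := exists_T_pow f
  obtain ⟨m, q, hq⟩ := exists_T_pow g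
  have hpq : p * q = Polynomial.X ^ (n + m) := by
    apply Polynomial.toLaurent_injective
    rw [map_mul, hp, hq, Polynomial.toLaurent_X_pow, mul_mul_mul_comm, hfg, one_mul, ← T_add]
    norm_cast
  obtain ⟨i, -, w, hw⟩ := (dvd_prime_pow Polynomial.prime_X (n + m)).mp (Dvd.intro q hpq)
  obtain ⟨c, hc, hcw⟩ := Polynomial.isUnit_iff.mp w⁻¹.isUnit
  refine ⟨c, hc, i - n, ?_⟩
  have hpX : p = Polynomial.X ^ i * Polynomial.C c := by
    rw [hcw, ← hw, Units.mul_inv_cancel_right]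
  calc f = f * T n * T (-n) := by rw [mul_assoc, ← T_add, add_neg_cancel, T_zero, mul_one]
    _ = C c * T (i - n) := by
      rw [← hp, hpX, map_mul, Polynomial.toLaurent_X_pow, Polynomial.toLaurent_C, T_sub]
      ring

theorem eq_one_of_isUnit_of_sq_dvd_sub_one [IsDomain R] [CharZero R]
    {f : R[T;T⁻¹]} (hf : IsUnit f) (hdvd : (T 1 - 1) ^ 2 ∣ f - 1) : f = 1 := by
  obtain ⟨c, -, a, rfl⟩ := exists_C_mul_T_of_isUnit hf
  have h := evalOneAddEps_eq_one_of_sq_dvd_sub_one hdvd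
  rw [evalOneAddEps_C_mul_T] at h
  have hc : c = 1 := by simpa using congrArg TrivSqZeroExt.fst h
  have ha : a = 0 := by simpa [hc] using congrArg TrivSqZeroExt.snd h
  rw [hc, ha, map_one, T_zero, one_mul]

end LaurentPolynomial

namespace Matrix

variable {n R : Type*} [Fintype n] [DecidableEq n] [CommRing R]

theorem dvd_det_one_add_smul_sub_one (r : R) (M : Matrix n n R) : r ∣ det (1 + r • M) - 1 := by
  rw [det_one_add_smul, add_assoc, add_sub_cancel_left]
  exact (dvd_mul_left r _).add (dvd_mul_of_dvd_right (dvd_pow_self r two_ne_zero) _)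

theorem dvd_trace_of_det_one_add_smul_eq_one [IsDomain R] {r : R} (hr : r ≠ 0)
    {M : Matrix n n R} (hdet : det (1 + r • M) = 1) : r ∣ trace M := by
  obtain ⟨e, he⟩ : ∃ e, det (1 + r • M) = 1 + trace M * r + e * r ^ 2 :=
    ⟨_, det_one_add_smul r M⟩
  refine ⟨-e, mul_right_cancel₀ hr ?_⟩
  linear_combination hdet - he

end Matrix

/-- If `A ≡ I mod s^k` with `k ≥ 2`, then `det A = 1`, and writing `A = I + s^k A'`,
the trace of `A'` is divisible by `s^k`; in particular `tr(A' mod s) = 0`. -/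
theorem det_one_and_trace (n k : ℕ) (hk : 2 ≤ k)
    (A : GL (Fin n) (LaurentPolynomial ℤ))
    (A' : Matrix (Fin n) (Fin n) (LaurentPolynomial ℤ))
    (hA : (A : Matrix (Fin n) (Fin n) (LaurentPolynomial ℤ)) = 1 + ss ^ k • A')
    (r : LaurentPolynomial ℤ →+* ℤ) (hr : r tt = 1) :
    (A : Matrix (Fin n) (Fin n) (LaurentPolynomial ℤ)).det = 1 ∧
      ss ^ k ∣ A'.trace ∧ (A'.map r).trace = 0 := by
  have hdet : (A : Matrix (Fin n) (Fin n) (LaurentPolynomial ℤ)).det = 1 := by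
    refine eq_one_of_isUnit_of_sq_dvd_sub_one (isUnit_iff_isUnit_det _ |>.mp A.isUnit) ?_
    rw [hA]
    exact (pow_dvd_pow _ hk).trans (dvd_det_one_add_smul_sub_one _ _)
  have htrace : ss ^ k ∣ A'.trace :=
    dvd_trace_of_det_one_add_smul_eq_one (pow_ne_zero _ T_one_sub_one_ne_zero) (hA ▸ hdet)
  refine ⟨hdet, htrace, ?_⟩
  obtain ⟨c, hc⟩ := htrace
  rw [← AddMonoidHom.map_trace r, hc, map_mul, map_pow, ss, map_sub, hr, map_one, sub_self,
    zero_pow (by omega), zero_mul]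
end

section
/- For n ≥ 2, the abelian group G₁ = {M ∈ M_n(ℤ) : M·(1,...,1)ᵀ = 0, Mᵀ = M} is generated by the matrices X_{ij} = E_{ii} + E_{jj} - E_{ij} - E_{ji} for 1 ≤ i < j ≤ n. -/
/-!
Adding `∑_{i<j} M i j • X_{ij}` to `M` kills every off-diagonal entry above the diagonal, while
keeping the matrix symmetric and the all-ones vector in its kernel. A symmetric matrix vanishing
above the diagonal is diagonal, and a diagonal matrix with zero row sums is zero.
-/

open Matrix

/-- `X_{ij} = E_{ii} + E_{jj} - E_{ij} - E_{ji}`. -/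
def Xmat (n : ℕ) (i j : Fin n) : Matrix (Fin n) (Fin n) ℤ :=
  Matrix.single i i 1 + Matrix.single j j 1
    - Matrix.single i j 1 - Matrix.single j i 1

/-- `Y_{ijk} = (E_{ij} - E_{ji}) - (E_{ik} - E_{ki}) + (E_{jk} - E_{kj})`. -/
def Ymat (n : ℕ) (i j k : Fin n) : Matrix (Fin n) (Fin n) ℤ :=
  (Matrix.single i j 1 - Matrix.single j i 1)
    - (Matrix.single i k 1 - Matrix.single k i 1)
    + (Matrix.single j k 1 - Matrix.single k j 1)

theorem Matrix.eq_zero_of_mulVec_one_of_apply_of_lt {ι R : Type*} [Fintype ι] [LinearOrder ι]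
    [NonAssocSemiring R] {M : Matrix ι ι R} (hM : Mᵀ = M) (h1 : M *ᵥ (fun _ => 1) = 0)
    (hlt : ∀ a b, a < b → M a b = 0) : M = 0 := by
  have hoff : ∀ a b, a ≠ b → M a b = 0 := by
    intro a b hab
    rcases hab.lt_or_gt with h | h
    · exact hlt a b h
    · rw [← hM, transpose_apply, hlt b a h]
  ext a b
  rcases eq_or_ne a b with rfl | hab
  · have hrow := congrFun h1 a
    rwa [mulVec, dotProduct, Finset.sum_eq_single a
      (fun b _ hb => by rw [hoff a b hb.symm, zero_mul]) (by simp), mul_one] at hrow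
  · exact hoff a b hab

theorem Xmat_transpose (n : ℕ) (i j : Fin n) : (Xmat n i j)ᵀ = Xmat n i j := by
  simp only [Xmat, transpose_sub, transpose_add, transpose_single]
  abel

theorem Xmat_mulVec_one (n : ℕ) (i j : Fin n) : Xmat n i j *ᵥ (fun _ => 1) = 0 := by
  ext a
  simp [Xmat, sub_mulVec, add_mulVec, single_mulVec]

theorem Xmat_apply_of_lt {n : ℕ} {i j a b : Fin n} (hij : i < j) (hab : a < b) :
    Xmat n i j a b = if i = a ∧ j = b then -1 else 0 := by
  simp only [Xmat, Matrix.sub_apply, Matrix.add_apply, single_apply]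
  grind

section XmatCombination

variable {n : ℕ}

def XmatCombination (c : Matrix (Fin n) (Fin n) ℤ) : Matrix (Fin n) (Fin n) ℤ :=
  ∑ p ∈ Finset.univ.filter (fun p : Fin n × Fin n => p.1 < p.2), c p.1 p.2 • Xmat n p.1 p.2

theorem XmatCombination_mem_span (c : Matrix (Fin n) (Fin n) ℤ) :
    XmatCombination c ∈ Submodule.span ℤ {X | ∃ i j : Fin n, i < j ∧ X = Xmat n i j} :=
  Submodule.sum_mem _ fun p hp =>
    Submodule.smul_mem _ _ (Submodule.subset_span ⟨p.1, p.2, (Finset.mem_filter.mp hp).2, rfl⟩)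

theorem XmatCombination_transpose (c : Matrix (Fin n) (Fin n) ℤ) :
    (XmatCombination c)ᵀ = XmatCombination c := by
  simp only [XmatCombination, transpose_sum, transpose_smul, Xmat_transpose]

theorem XmatCombination_mulVec_one (c : Matrix (Fin n) (Fin n) ℤ) :
    XmatCombination c *ᵥ (fun _ => 1) = 0 := by
  simp only [XmatCombination, Matrix.sum_mulVec, smul_mulVec, Xmat_mulVec_one, smul_zero,
    Finset.sum_const_zero]

theorem XmatCombination_apply_of_lt (c : Matrix (Fin n) (Fin n) ℤ) {a b : Fin n} (hab : a < b) :
    XmatCombination c a b = -c a b := by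
  rw [XmatCombination, Matrix.sum_apply, Finset.sum_eq_single (a, b)]
  · simp [Xmat_apply_of_lt hab hab]
  · rintro ⟨i, j⟩ hp hne
    rw [Matrix.smul_apply, Xmat_apply_of_lt (Finset.mem_filter.mp hp).2 hab,
      if_neg (by simpa using hne), smul_zero]
  · simp [hab]

end XmatCombination

theorem G1_generated_general (n : ℕ) (M : Matrix (Fin n) (Fin n) ℤ)
    (h1 : M.mulVec (fun _ => 1) = 0) (h2 : Mᵀ = M) :
    M ∈ Submodule.span ℤ {X | ∃ i j : Fin n, i < j ∧ X = Xmat n i j} := by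
  have hzero : M + XmatCombination M = 0 := by
    refine Matrix.eq_zero_of_mulVec_one_of_apply_of_lt ?_ ?_ fun a b hab => ?_
    · rw [transpose_add, h2, XmatCombination_transpose]
    · rw [add_mulVec, h1, XmatCombination_mulVec_one, add_zero]
    · rw [Matrix.add_apply, XmatCombination_apply_of_lt M hab, add_neg_cancel]
  rw [eq_neg_of_add_eq_zero_left hzero]
  exact Submodule.neg_mem _ (XmatCombination_mem_span M)

/-- For `n ≥ 2`, the group `G₁` of symmetric integer matrices killing the all-ones
vector is generated by the `X_{ij}`, `i < j`. -/
theorem G1_generated (n : ℕ) (hn : 2 ≤ n) (M : Matrix (Fin n) (Fin n) ℤ)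
    (h1 : M.mulVec (fun _ => 1) = 0) (h2 : Mᵀ = M) :
    M ∈ Submodule.span ℤ {X | ∃ i j : Fin n, i < j ∧ X = Xmat n i j} :=
  G1_generated_general n M h1 h2
end

section
/- For n ≥ 3, the abelian group {M ∈ M_n(ℤ) : M·(1,...,1)ᵀ = 0, Mᵀ = -M} is spanned over ℤ by the matrices Y_{ijk} = (E_{ij} - E_{ji}) - (E_{ik} - E_{ki}) + (E_{jk} - E_{kj}) for 1 ≤ i < j < k ≤ n. -/
open Matrix

/-!
A skew-symmetric matrix with zero row sums is determined by its entries `M a b` with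
`0 < a < b`: the row sums recover column `0`, and skew-symmetry the rest. Since
`Y_{0jk}` has exactly one such entry, namely `1` at `(j, k)`, the matrix `M` equals
`∑_{0 < j < k} M j k • Y_{0jk}`.
-/

open Finset

namespace Matrix

variable {ι R : Type*} [Fintype ι] [CommRing R] {M : Matrix ι ι R}

variable (ι R) in
def skewZeroRowSum : Submodule R (Matrix ι ι R) where
  carrier := {M | M *ᵥ (fun _ => 1) = 0 ∧ Mᵀ = -M}
  add_mem' {M N} hM hN := ⟨by rw [add_mulVec, hM.1, hN.1, add_zero], by
    rw [transpose_add, hM.2, hN.2, neg_add]⟩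
  zero_mem' := ⟨zero_mulVec _, by rw [transpose_zero, neg_zero]⟩
  smul_mem' c M hM := ⟨by rw [smul_mulVec, hM.1, smul_zero], by
    rw [transpose_smul, hM.2, smul_neg]⟩

namespace skewZeroRowSum

lemma sum_row_eq_zero (hM : M ∈ skewZeroRowSum ι R) (a : ι) : ∑ c, M a c = 0 := by
  simpa [mulVec, dotProduct] using congrFun hM.1 a

lemma apply_swap (hM : M ∈ skewZeroRowSum ι R) (a b : ι) : M b a = -M a b := by
  simpa using congrFun (congrFun hM.2 a) b

lemma eq_zero_of_forall_ne [DecidableEq ι] (hM : M ∈ skewZeroRowSum ι R) (z : ι)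
    (h : ∀ a b, a ≠ z → b ≠ z → M a b = 0) : M = 0 := by
  have apply_z_of_row (a : ι) (ha : ∀ c, c ≠ z → M a c = 0) : M a z = 0 := by
    rw [← sum_row_eq_zero hM a, sum_eq_single z (fun c _ hc => ha c hc) (by simp)]
  have col_z (a : ι) (ha : a ≠ z) : M a z = 0 := apply_z_of_row a (h a · ha)
  have row_z (b : ι) (hb : b ≠ z) : M z b = 0 := by
    rw [apply_swap hM, col_z b hb, neg_zero]
  ext a b
  rcases eq_or_ne a z with rfl | ha
  · rcases eq_or_ne b a with rfl | hb
    · exact apply_z_of_row b row_z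
    · exact row_z b hb
  · rcases eq_or_ne b z with rfl | hb
    · exact col_z a ha
    · exact h a b ha hb

lemma eq_zero_of_forall_lt [DecidableEq ι] [LinearOrder ι] [NoZeroDivisors R] [CharZero R]
    (hM : M ∈ skewZeroRowSum ι R) (z : ι) (h : ∀ a b, a ≠ z → b ≠ z → a < b → M a b = 0) :
    M = 0 := by
  refine eq_zero_of_forall_ne hM z fun a b ha hb => ?_
  rcases lt_trichotomy a b with hab | rfl | hab
  · exact h a b ha hb hab
  · exact CharZero.eq_neg_self_iff.mp (apply_swap hM a a)
  · rw [apply_swap hM, h b a hb ha hab, neg_zero]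

end skewZeroRowSum

end Matrix

lemma Ymat_mem_skewZeroRowSum (n : ℕ) (i j k : Fin n) :
    Ymat n i j k ∈ skewZeroRowSum (Fin n) ℤ := by
  constructor
  · simp [Ymat, sub_mulVec, add_mulVec, single_mulVec_eq]
  · simp only [Ymat, transpose_add, transpose_sub, transpose_single]
    abel

lemma span_Ymat_le_skewZeroRowSum (n : ℕ) :
    Submodule.span ℤ {X | ∃ i j k : Fin n, i < j ∧ j < k ∧ X = Ymat n i j k} ≤
      skewZeroRowSum (Fin n) ℤ := by
  rw [Submodule.span_le]
  rintro _ ⟨i, j, k, -, -, rfl⟩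
  exact Ymat_mem_skewZeroRowSum n i j k

lemma Ymat_apply_of_ne {n : ℕ} {z j k a b : Fin n} (ha : a ≠ z) (hb : b ≠ z) (hab : a < b)
    (hjk : j < k) : Ymat n z j k a b = single j k 1 a b := by
  have hkj : single k j (1 : ℤ) a b = 0 :=
    single_apply_of_ne _ _ _ _ _ (by rintro ⟨rfl, rfl⟩; exact hjk.asymm hab)
  simp [Ymat, single_apply_of_row_ne ha.symm, single_apply_of_col_ne _ _ hb.symm, hkj]

theorem G2_generated_general (n : ℕ) (M : Matrix (Fin n) (Fin n) ℤ)
    (h1 : M.mulVec (fun _ => 1) = 0) (h2 : Mᵀ = -M) :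
    M ∈ Submodule.span ℤ
      {X | ∃ i j k : Fin n, i < j ∧ j < k ∧ X = Ymat n i j k} := by
  obtain _ | n := n
  · exact Subsingleton.elim M 0 ▸ zero_mem _
  set S := ∑ j ∈ Ioi 0, ∑ k ∈ Ioi j, M j k • Ymat (n + 1) 0 j k
  have hS : S ∈ Submodule.span ℤ {X | ∃ i j k : Fin (n + 1), i < j ∧ j < k ∧ X = Ymat _ i j k} :=
    Submodule.sum_mem _ fun j hj => Submodule.sum_mem _ fun k hk => Submodule.smul_mem _ _ <|
      Submodule.subset_span ⟨0, j, k, mem_Ioi.mp hj, mem_Ioi.mp hk, rfl⟩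
  have hMS : M - S = 0 := by
    refine skewZeroRowSum.eq_zero_of_forall_lt
      (sub_mem ⟨h1, h2⟩ (span_Ymat_le_skewZeroRowSum _ hS)) 0 fun a b ha hb hab => ?_
    have hSab : S a b = M a b := by
      simp only [S, Matrix.sum_apply, Matrix.smul_apply, smul_eq_mul]
      rw [sum_congr rfl fun j _ => sum_congr rfl fun k hk => by
        rw [Ymat_apply_of_ne ha hb hab (mem_Ioi.mp hk)]]
      simp [single_apply, ite_and, ha, hab]
    rw [Matrix.sub_apply, hSab, sub_self]
  rwa [sub_eq_zero.mp hMS]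

/-- For `n ≥ 3`, the group of skew-symmetric integer matrices killing the all-ones
vector is spanned by the `Y_{ijk}`, `i < j < k`. -/
theorem G2_generated (n : ℕ) (hn : 3 ≤ n) (M : Matrix (Fin n) (Fin n) ℤ)
    (h1 : M.mulVec (fun _ => 1) = 0) (h2 : Mᵀ = -M) :
    M ∈ Submodule.span ℤ
      {X | ∃ i j k : Fin n, i < j ∧ j < k ∧ X = Ymat n i j k} :=
  G2_generated_general n M h1 h2
end
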